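/- (One-step error contraction of NST+HT+FB with feedback.) Suppose y = Ax + e with x s-sparse, δ_{2s} < 1, and let μ^{k-1} be the previous s-sparse iterate. Let T_k be the index set of the s largest absolute entries of u := μ^{k-1} + Aᵀ(AAᵀ)^{-1}(y - Aμ^{k-1}), and let u^k be defined by u^k_{T_k} = x^k_{T_k} + (A_{T_k}ᵀA_{T_k})^{-1}A_{T_k}ᵀA_{T_k^c}x^k_{T_k^c}, u^k_{T_k^c} = 0, where x^k satisfies Ax^k = y. Then ‖x - u^k‖₂ ≤ √(2γ_{3s}²/(1-δ_{2s}²)) ‖x - μ^{k-1}‖₂ + (√(1+δ_s)/(1-δ_{2s}) + √(2(1+θ_{2s}))/√(1-δ_{2s}²)) ‖e‖₂. -/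

import Mathlib

/-!
Let `u = μ + Aᵀ(AAᵀ)⁻¹(y - Aμ)` be the null space tuning step and `P = Aᵀ(AAᵀ)⁻¹A` the
projection onto the row space of `A`, so that `u - x = (I - P)(μ - x) + Aᵀ(AAᵀ)⁻¹e`.

Thresholding: as `T` carries the `s` largest entries of `u`, the part `x_{Tᶜ}` missed by `T` is
at most `√2 ‖(u - x)_{supp x ∪ T}‖`. Since `‖(I - P)z‖² = ‖z‖² - ‖(AAᵀ)^{-1/2}Az‖² ≤ γ ‖z‖²`
on `3s`-sparse vectors and `I - P` is an orthogonal projection, this is at most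
`√2 (γ ‖x - μ‖ + √(1 + θ) ‖e‖)`.

Feedback: the feedback step makes `y - A u^k` orthogonal to the columns of `A_T`. For
`v = x - u^k` this means `⟨Av, Av_T⟩ = -⟨e, Av_T⟩`, and the restricted isometry property turns it
into `‖v_T‖ ≤ δ_{2s} ‖v‖ + √(1 + δ_s) ‖e‖`. As `v_{Tᶜ} = x_{Tᶜ}`, solving the quadratic inequality
given by `‖v‖² = ‖v_T‖² + ‖v_{Tᶜ}‖²` bounds `‖v‖` by `‖x_{Tᶜ}‖ / √(1 - δ_{2s}²)` plus the noise
term, and the thresholding bound finishes the proof.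
-/

open Matrix Finset Real MeasureTheory ProbabilityTheory
open scoped BigOperators

noncomputable section

/-- squared Euclidean norm -/
def nsq {n : ℕ} (v : Fin n → ℝ) : ℝ := ∑ i, v i ^ 2

/-- Euclidean norm -/
def nrm {n : ℕ} (v : Fin n → ℝ) : ℝ := Real.sqrt (∑ i, v i ^ 2)

open Classical in
/-- support of a vector, as a finset -/
def suppF {n : ℕ} (x : Fin n → ℝ) : Finset (Fin n) :=
  Finset.univ.filter (fun i => x i ≠ 0)

/-- `x` is `s`-sparse -/
def Sparse {n : ℕ} (s : ℕ) (x : Fin n → ℝ) : Prop := (suppF x).card ≤ s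

/-- `δ` is a restricted isometry constant of order `t` for `A`:
`(1-δ)‖x‖² ≤ ‖Ax‖² ≤ (1+δ)‖x‖²` for all `t`-sparse `x`. -/
def IsRIP {M N : ℕ} (A : Matrix (Fin M) (Fin N) ℝ) (t : ℕ) (δ : ℝ) : Prop :=
  ∀ x : Fin N → ℝ, Sparse t x →
    (1 - δ) * nsq x ≤ nsq (A.mulVec x) ∧ nsq (A.mulVec x) ≤ (1 + δ) * nsq x

/-- restriction of a vector to an index set (zeroing entries outside it) -/
def restr {n : ℕ} (T : Finset (Fin n)) (x : Fin n → ℝ) : Fin n → ℝ :=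
  fun i => if i ∈ T then x i else 0

/-- submatrix of the columns of `A` indexed by `T` -/
def colSub {M N : ℕ} (A : Matrix (Fin M) (Fin N) ℝ) (T : Finset (Fin N)) :
    Matrix (Fin M) T ℝ :=
  fun i j => A i j.val

/-- the feedback step: `μ'_T = x_T + (A_Tᵀ A_T)⁻¹ A_Tᵀ A_{Tᶜ} x_{Tᶜ}`, `μ'_{Tᶜ} = 0`. -/
def feedback {M N : ℕ} (A : Matrix (Fin M) (Fin N) ℝ) (T : Finset (Fin N))
    (x : Fin N → ℝ) : Fin N → ℝ :=
  fun i => if h : i ∈ T then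
    x i + ((((colSub A T)ᵀ * colSub A T)⁻¹ * (colSub A T)ᵀ).mulVec
      (A.mulVec (restr Tᶜ x))) ⟨i, h⟩
  else 0

/-- `hatAbs x k` is the `k`-th largest absolute entry of `x` (1-based index). -/
def hatAbs {n : ℕ} (x : Fin n → ℝ) (k : ℕ) : ℝ :=
  if h : k - 1 < n then |x (Tuple.sort (fun i => -|x i|) ⟨k - 1, h⟩)| else 0

/-- `T` contains the indices of the `p` largest absolute entries of `x`. -/
def containsTop {n : ℕ} (x : Fin n → ℝ) (p : ℕ) (T : Finset (Fin n)) : Prop :=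
  ∀ j : Fin n, (j : ℕ) < p → Tuple.sort (fun i => -|x i|) j ∈ T

/-- The NST+HT+FB algorithm: `T k` is the set of the `s` largest absolute entries of the
feasible iterate `x^k`, `μ^k` is the thresholding-plus-feedback of `x^k` on `T k`, and
`x^{k+1} = μ^k + Aᵀ(AAᵀ)⁻¹(y - Aμ^k)` is the null space tuning step. -/
def NSTSpec {M N : ℕ} (A : Matrix (Fin M) (Fin N) ℝ) (y : Fin M → ℝ) (s : ℕ)
    (T : ℕ → Finset (Fin N)) (xs μ : ℕ → Fin N → ℝ) : Prop :=
  (∀ k, A.mulVec (xs k) = y) ∧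
  (∀ k, (T k).card = s) ∧
  (∀ k, ∀ i ∈ T k, ∀ j ∉ T k, |xs k j| ≤ |xs k i|) ∧
  (∀ k, μ k = feedback A (T k) (xs k)) ∧
  (∀ k, xs (k + 1) = μ k + (Aᵀ * (A * Aᵀ)⁻¹).mulVec (y - A.mulVec (μ k)))

/-- The adaptive AdptNST+HT+FB algorithm: identical to NST+HT+FB except that at step `k`
the index set `T k` consists of the `k` largest absolute entries of `x^k`. -/
def AdptSpec {M N : ℕ} (A : Matrix (Fin M) (Fin N) ℝ) (y : Fin M → ℝ)
    (T : ℕ → Finset (Fin N)) (xs μ : ℕ → Fin N → ℝ) : Prop :=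
  (∀ k, A.mulVec (xs k) = y) ∧
  (∀ k, (T k).card = k) ∧
  (∀ k, ∀ i ∈ T k, ∀ j ∉ T k, |xs k j| ≤ |xs k i|) ∧
  (∀ k, μ k = feedback A (T k) (xs k)) ∧
  (∀ k, xs (k + 1) = μ k + (Aᵀ * (A * Aᵀ)⁻¹).mulVec (y - A.mulVec (μ k)))

/-- The square root of a positive semidefinite matrix (removed from Mathlib; old definition). -/
def Matrix.PosSemidef.sqrt {n : Type*} [Fintype n] [DecidableEq n] {A : Matrix n n ℝ}
    (hA : A.PosSemidef) : Matrix n n ℝ :=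
  hA.1.eigenvectorUnitary.1 * diagonal ((↑) ∘ (√·) ∘ hA.1.eigenvalues) *
    (star hA.1.eigenvectorUnitary : Matrix n n ℝ)

section Euclidean

variable {n : ℕ}

lemma nrm_eq_norm_toLp (v : Fin n → ℝ) : nrm v = ‖WithLp.toLp 2 v‖ := by
  simp [nrm, EuclideanSpace.norm_eq]

lemma nrm_eq_sqrt_nsq (v : Fin n → ℝ) : nrm v = √(nsq v) := rfl

lemma nsq_nonneg (v : Fin n → ℝ) : 0 ≤ nsq v := Finset.sum_nonneg fun _ _ => sq_nonneg _

lemma nrm_nonneg (v : Fin n → ℝ) : 0 ≤ nrm v := Real.sqrt_nonneg _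

lemma nrm_sq (v : Fin n → ℝ) : nrm v ^ 2 = nsq v := Real.sq_sqrt (nsq_nonneg v)

lemma nsq_eq_dotProduct (v : Fin n → ℝ) : nsq v = v ⬝ᵥ v := by
  simp [nsq, dotProduct, sq]

@[simp] lemma nrm_zero : nrm (0 : Fin n → ℝ) = 0 := by simp [nrm]

@[simp] lemma nsq_zero : nsq (0 : Fin n → ℝ) = 0 := by simp [nsq]

lemma nrm_pos {v : Fin n → ℝ} (hv : v ≠ 0) : 0 < nrm v := by
  rw [nrm_eq_norm_toLp]
  exact norm_pos_iff.2 (by simpa using hv)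

lemma nsq_pos {v : Fin n → ℝ} (hv : v ≠ 0) : 0 < nsq v := by
  rw [← nrm_sq]
  exact pow_pos (nrm_pos hv) 2

lemma nrm_add_le (u v : Fin n → ℝ) : nrm (u + v) ≤ nrm u + nrm v := by
  simpa only [nrm_eq_norm_toLp, WithLp.toLp_add] using norm_add_le _ _

lemma nrm_sub_le (u v : Fin n → ℝ) : nrm (u - v) ≤ nrm u + nrm v := by
  simpa only [nrm_eq_norm_toLp, WithLp.toLp_sub] using norm_sub_le _ _

lemma nrm_neg (v : Fin n → ℝ) : nrm (-v) = nrm v := by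
  simp [nrm]

lemma nrm_sub_comm (u v : Fin n → ℝ) : nrm (u - v) = nrm (v - u) := by
  simpa only [nrm_eq_norm_toLp, WithLp.toLp_sub] using norm_sub_rev _ _

lemma dotProduct_le_nrm_mul_nrm (u v : Fin n → ℝ) : u ⬝ᵥ v ≤ nrm u * nrm v := by
  simpa [nrm_eq_norm_toLp, EuclideanSpace.inner_toLp_toLp, dotProduct_comm] using
    real_inner_le_norm (WithLp.toLp 2 u) (WithLp.toLp 2 v)

lemma nrm_le_of_nsq_le_mul {v : Fin n → ℝ} {c : ℝ} (hc : 0 ≤ c) (h : nsq v ≤ nrm v * c) :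
    nrm v ≤ c := by
  rw [← nrm_sq, sq] at h
  nlinarith [nrm_nonneg v]

lemma nrm_add_nrm_le_sqrt_two_mul {a b c : Fin n → ℝ} (h : nsq a + nsq b ≤ nsq c) :
    nrm a + nrm b ≤ √2 * nrm c := by
  refine le_of_pow_le_pow_left₀ two_ne_zero (mul_nonneg (Real.sqrt_nonneg 2) (nrm_nonneg c)) ?_
  rw [mul_pow, Real.sq_sqrt zero_le_two, nrm_sq c]
  nlinarith [nrm_sq a, nrm_sq b, sq_nonneg (nrm a - nrm b)]

end Euclidean

section Support

variable {n : ℕ}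

lemma suppF_subset_iff {x : Fin n → ℝ} {R : Finset (Fin n)} :
    suppF x ⊆ R ↔ ∀ i ∉ R, x i = 0 := by
  simp only [suppF, Finset.subset_iff, Finset.mem_filter, Finset.mem_univ, true_and]
  exact ⟨fun h i hi => by_contra fun hx => hi (h hx), fun h i hx => by_contra fun hi => hx (h i hi)⟩

lemma sparse_of_suppF_subset {x : Fin n → ℝ} {R : Finset (Fin n)} {t : ℕ}
    (h : suppF x ⊆ R) (hR : R.card ≤ t) : Sparse t x :=
  (Finset.card_le_card h).trans hR

lemma Sparse.mono {x : Fin n → ℝ} {s t : ℕ} (hx : Sparse s x) (h : s ≤ t) : Sparse t x :=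
  hx.trans h

lemma Sparse.sub {u v : Fin n → ℝ} {s t : ℕ} (hu : Sparse s u) (hv : Sparse t v) :
    Sparse (s + t) (u - v) := by
  refine sparse_of_suppF_subset (R := suppF u ∪ suppF v) ?_
    ((Finset.card_union_le _ _).trans (add_le_add hu hv))
  rw [suppF_subset_iff]
  intro i hi
  simp only [Finset.mem_union, not_or, suppF, Finset.mem_filter, Finset.mem_univ, true_and,
    not_not] at hi
  simp [hi.1, hi.2]

lemma Sparse.card_suppF_union_le {x : Fin n → ℝ} {s : ℕ} (hx : Sparse s x)
    {T : Finset (Fin n)} (hT : T.card ≤ s) : (suppF x ∪ T).card ≤ 2 * s :=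
  (Finset.card_union_le _ _).trans (by rw [two_mul]; exact add_le_add hx hT)

lemma suppF_restr_subset (T : Finset (Fin n)) (x : Fin n → ℝ) : suppF (restr T x) ⊆ T :=
  suppF_subset_iff.2 fun _ hi => if_neg hi

@[simp] lemma restr_zero (T : Finset (Fin n)) : restr T (0 : Fin n → ℝ) = 0 := by
  funext i; simp [restr]

lemma restr_add (T : Finset (Fin n)) (u v : Fin n → ℝ) :
    restr T (u + v) = restr T u + restr T v := by
  funext i; by_cases h : i ∈ T <;> simp [restr, h]

lemma restr_add_restr_compl (T : Finset (Fin n)) (x : Fin n → ℝ) :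
    restr T x + restr Tᶜ x = x := by
  funext i; by_cases h : i ∈ T <;> simp [restr, h]

lemma nsq_restr (T : Finset (Fin n)) (x : Fin n → ℝ) : nsq (restr T x) = ∑ i ∈ T, x i ^ 2 := by
  simp [nsq, restr, apply_ite (· ^ 2), Finset.sum_ite_mem]

lemma nsq_restr_add_nsq_restr_compl (T : Finset (Fin n)) (x : Fin n → ℝ) :
    nsq (restr T x) + nsq (restr Tᶜ x) = nsq x := by
  rw [nsq_restr, nsq_restr, Finset.sum_add_sum_compl, nsq]

lemma restr_dotProduct_self (T : Finset (Fin n)) (x : Fin n → ℝ) :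
    restr T x ⬝ᵥ x = nsq (restr T x) := by
  simp only [nsq, dotProduct]
  refine Finset.sum_congr rfl fun i _ => ?_
  by_cases h : i ∈ T <;> simp [restr, h, sq]

end Support

section Thresholding

variable {n : ℕ}

lemma sum_sq_le_sum_sq_of_card_le (u : Fin n → ℝ) {Q Q' : Finset (Fin n)}
    (hcard : Q.card ≤ Q'.card) (hdom : ∀ j ∈ Q, ∀ i ∈ Q', |u j| ≤ |u i|) :
    ∑ j ∈ Q, u j ^ 2 ≤ ∑ i ∈ Q', u i ^ 2 := by
  rcases Q'.eq_empty_or_nonempty with rfl | hQ'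
  · simp [Finset.card_eq_zero.1 (Nat.le_zero.1 hcard)]
  obtain ⟨i₀, hi₀, hmin⟩ := Q'.exists_min_image (fun i => u i ^ 2) hQ'
  calc ∑ j ∈ Q, u j ^ 2 ≤ Q.card • u i₀ ^ 2 :=
        Finset.sum_le_card_nsmul _ _ _ fun j hj => sq_le_sq.2 (hdom j hj i₀ hi₀)
    _ ≤ Q'.card • u i₀ ^ 2 := nsmul_le_nsmul_left (sq_nonneg _) hcard
    _ ≤ ∑ i ∈ Q', u i ^ 2 := Finset.card_nsmul_le_sum _ _ _ hmin

theorem nrm_restr_compl_le_of_top {u x : Fin n → ℝ} {T : Finset (Fin n)}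
    (hcard : (suppF x).card ≤ T.card) (htop : ∀ i ∈ T, ∀ j ∉ T, |u j| ≤ |u i|) :
    nrm (restr Tᶜ x) ≤ √2 * nrm (restr (suppF x ∪ T) (u - x)) := by
  set S := suppF x
  have hxS : ∀ i ∉ S, x i = 0 := suppF_subset_iff.1 subset_rfl
  have hsplit : restr Tᶜ x = restr (S \ T) u - restr (S \ T) (u - x) := by
    funext i
    by_cases hiT : i ∈ T
    · simp [restr, hiT]
    · by_cases hiS : i ∈ S <;> simp [restr, hiT, hiS, hxS]
  have hmissed : nsq (restr (S \ T) u) ≤ nsq (restr (T \ S) (u - x)) := by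
    rw [nsq_restr, nsq_restr]
    calc ∑ j ∈ S \ T, u j ^ 2 ≤ ∑ i ∈ T \ S, u i ^ 2 :=
          sum_sq_le_sum_sq_of_card_le u (Finset.card_sdiff_le_card_sdiff_iff.2 hcard)
            fun j hj i hi => htop i (Finset.mem_sdiff.1 hi).1 j (Finset.mem_sdiff.1 hj).2
      _ = ∑ i ∈ T \ S, (u - x) i ^ 2 :=
          Finset.sum_congr rfl fun i hi => by simp [hxS i (Finset.mem_sdiff.1 hi).2]
  have hdisj : nsq (restr (T \ S) (u - x)) + nsq (restr (S \ T) (u - x)) ≤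
      nsq (restr (S ∪ T) (u - x)) := by
    simp only [nsq_restr]
    rw [← Finset.sum_union disjoint_sdiff_sdiff]
    exact Finset.sum_le_sum_of_subset_of_nonneg
      (Finset.union_subset (Finset.sdiff_subset.trans Finset.subset_union_right)
        (Finset.sdiff_subset.trans Finset.subset_union_left))
      fun _ _ _ => sq_nonneg _
  calc nrm (restr Tᶜ x) ≤ nrm (restr (S \ T) u) + nrm (restr (S \ T) (u - x)) :=
        hsplit ▸ nrm_sub_le _ _
    _ ≤ nrm (restr (T \ S) (u - x)) + nrm (restr (S \ T) (u - x)) := by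
        gcongr
        exact Real.sqrt_le_sqrt hmissed
    _ ≤ √2 * nrm (restr (S ∪ T) (u - x)) := nrm_add_nrm_le_sqrt_two_mul hdisj

end Thresholding

section RIP

variable {M N t : ℕ} {A : Matrix (Fin M) (Fin N) ℝ} {δ : ℝ}

lemma IsRIP.nonneg_of_ne_zero (h : IsRIP A t δ) {z : Fin N → ℝ} (hz : Sparse t z)
    (hz0 : z ≠ 0) : 0 ≤ δ := by
  obtain ⟨hlo, hup⟩ := h z hz
  nlinarith [nsq_pos hz0]

lemma IsRIP.nrm_mulVec_le (h : IsRIP A t δ) {z : Fin N → ℝ} (hz : Sparse t z) :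
    nrm (A *ᵥ z) ≤ √(1 + δ) * nrm z := by
  rw [nrm_eq_sqrt_nsq, nrm_eq_sqrt_nsq, ← Real.sqrt_mul' _ (nsq_nonneg z)]
  exact Real.sqrt_le_sqrt (h z hz).2

/-- Polarization, applied to `‖w‖ u ± ‖u‖ w`. -/
theorem IsRIP.dotProduct_le (h : IsRIP A t δ) {R : Finset (Fin N)} (hR : R.card ≤ t)
    {u w : Fin N → ℝ} (hu : suppF u ⊆ R) (hw : suppF w ⊆ R) :
    u ⬝ᵥ w ≤ (A *ᵥ u) ⬝ᵥ (A *ᵥ w) + δ * nrm u * nrm w := by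
  rcases eq_or_ne u 0 with rfl | hu0
  · simp
  rcases eq_or_ne w 0 with rfl | hw0
  · simp
  have hsp : ∀ c d : ℝ, Sparse t (c • u + d • w) := fun c d => by
    refine sparse_of_suppF_subset ?_ hR
    rw [suppF_subset_iff] at hu hw ⊢
    intro i hi
    simp [hu i hi, hw i hi]
  set a := nrm u
  set b := nrm w
  have hab : 0 < a * b := mul_pos (nrm_pos hu0) (nrm_pos hw0)
  have hplus := (h _ (hsp b a)).1
  have hminus := (h _ (hsp b (-a))).2
  simp only [nsq_eq_dotProduct, mulVec_add, mulVec_smul, add_dotProduct, dotProduct_add,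
    smul_dotProduct, dotProduct_smul, smul_eq_mul, dotProduct_comm w u,
    dotProduct_comm (A *ᵥ w) (A *ᵥ u)] at hplus hminus
  rw [← nsq_eq_dotProduct u, ← nsq_eq_dotProduct w, ← nrm_sq, ← nrm_sq] at hplus hminus
  nlinarith

end RIP

section Projection

variable {n : ℕ}

lemma mulVec_dotProduct_mulVec_of_idempotent {Q : Matrix (Fin n) (Fin n) ℝ} (hsymm : Qᵀ = Q)
    (hidem : Q * Q = Q) (u w : Fin n → ℝ) : (Q *ᵥ u) ⬝ᵥ (Q *ᵥ w) = u ⬝ᵥ (Q *ᵥ w) := by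
  rw [dotProduct_comm, ← dotProduct_transpose_mulVec, mulVec_mulVec, hsymm, hidem]

theorem nrm_restr_mulVec_le_of_idempotent {Q : Matrix (Fin n) (Fin n) ℝ} (hsymm : Qᵀ = Q)
    (hidem : Q * Q = Q) {t : ℕ} {c : ℝ} (hQ : ∀ w, Sparse t w → nsq (Q *ᵥ w) ≤ c * nsq w)
    {R : Finset (Fin n)} (hR : R.card ≤ t) {z : Fin n → ℝ} (hz : Sparse t z) :
    nrm (restr R (Q *ᵥ z)) ≤ c * nrm z := by
  rcases eq_or_ne z 0 with rfl | hz0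
  · simp
  have hc : 0 ≤ c := nonneg_of_mul_nonneg_left ((nsq_nonneg _).trans (hQ z hz)) (nsq_pos hz0)
  have hshrink : ∀ w, Sparse t w → nrm (Q *ᵥ w) ≤ √c * nrm w := fun w hw => by
    rw [nrm_eq_sqrt_nsq, nrm_eq_sqrt_nsq, ← Real.sqrt_mul' _ (nsq_nonneg w)]
    exact Real.sqrt_le_sqrt (hQ w hw)
  set g := restr R (Q *ᵥ z)
  refine nrm_le_of_nsq_le_mul (mul_nonneg hc (nrm_nonneg z)) ?_
  calc nsq g = (Q *ᵥ g) ⬝ᵥ (Q *ᵥ z) := by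
        rw [mulVec_dotProduct_mulVec_of_idempotent hsymm hidem, restr_dotProduct_self]
    _ ≤ nrm (Q *ᵥ g) * nrm (Q *ᵥ z) := dotProduct_le_nrm_mul_nrm _ _
    _ ≤ (√c * nrm g) * (√c * nrm z) :=
        mul_le_mul (hshrink g (sparse_of_suppF_subset (suppF_restr_subset R _) hR))
          (hshrink z hz) (nrm_nonneg _) (mul_nonneg (Real.sqrt_nonneg c) (nrm_nonneg g))
    _ = nrm g * (c * nrm z) := by
        rw [mul_mul_mul_comm, Real.mul_self_sqrt hc]
        ring

end Projection

lemma IsRIP.nrm_restr_transpose_mulVec_le {M N t : ℕ} {B : Matrix (Fin M) (Fin N) ℝ} {θ : ℝ}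
    (h : IsRIP B t θ) {R : Finset (Fin N)} (hR : R.card ≤ t) (e : Fin M → ℝ) :
    nrm (restr R (Bᵀ *ᵥ e)) ≤ √(1 + θ) * nrm e := by
  set g := restr R (Bᵀ *ᵥ e)
  refine nrm_le_of_nsq_le_mul (mul_nonneg (Real.sqrt_nonneg _) (nrm_nonneg e)) ?_
  calc nsq g = (B *ᵥ g) ⬝ᵥ e := by
        rw [← restr_dotProduct_self, dotProduct_transpose_mulVec, dotProduct_comm]
    _ ≤ nrm (B *ᵥ g) * nrm e := dotProduct_le_nrm_mul_nrm _ _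
    _ ≤ (√(1 + θ) * nrm g) * nrm e := mul_le_mul_of_nonneg_right
        (h.nrm_mulVec_le (sparse_of_suppF_subset (suppF_restr_subset R _) hR)) (nrm_nonneg e)
    _ = nrm g * (√(1 + θ) * nrm e) := by ring

lemma Matrix.PosSemidef.sqrt_mul_self {n : Type*} [Fintype n] [DecidableEq n]
    {K : Matrix n n ℝ} (hK : K.PosSemidef) : hK.sqrt * hK.sqrt = K := by
  set U : Matrix n n ℝ := (hK.1.eigenvectorUnitary : Matrix n n ℝ)
  have hUU : (star U) * U = 1 := Unitary.coe_star_mul_self _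
  have hD : diagonal ((↑) ∘ (√·) ∘ hK.1.eigenvalues) *
      diagonal ((↑) ∘ (√·) ∘ hK.1.eigenvalues) =
      diagonal (RCLike.ofReal ∘ hK.1.eigenvalues : n → ℝ) := by
    rw [diagonal_mul_diagonal]
    congr 1
    funext i
    simp [Real.mul_self_sqrt (hK.eigenvalues_nonneg i)]
  conv_rhs => rw [hK.1.spectral_theorem, Unitary.conjStarAlgAut_apply]
  simp only [Matrix.PosSemidef.sqrt, Matrix.mul_assoc]
  rw [← Matrix.mul_assoc (star U), hUU, Matrix.one_mul, ← Matrix.mul_assoc (diagonal _), hD]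

lemma Matrix.PosSemidef.transpose_sqrt {n : Type*} [Fintype n] [DecidableEq n]
    {K : Matrix n n ℝ} (hK : K.PosSemidef) : hK.sqrtᵀ = hK.sqrt := by
  rw [← conjTranspose_eq_transpose_of_trivial]
  simp [Matrix.PosSemidef.sqrt, Matrix.mul_assoc, Matrix.star_eq_conjTranspose]

section RowSpace

variable {M N : ℕ} (A : Matrix (Fin M) (Fin N) ℝ)

def rowProj : Matrix (Fin N) (Fin N) ℝ := Aᵀ * (A * Aᵀ)⁻¹ * A

lemma transpose_inv_mul_self_mul : ((A * Aᵀ)⁻¹ * A)ᵀ = Aᵀ * (A * Aᵀ)⁻¹ := by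
  rw [transpose_mul, transpose_nonsing_inv, transpose_mul, transpose_transpose]

lemma transpose_one_sub_rowProj : (1 - rowProj A)ᵀ = 1 - rowProj A := by
  simp [rowProj, transpose_nonsing_inv, Matrix.mul_assoc]

lemma one_sub_rowProj_mul_self (hA : IsUnit (A * Aᵀ).det) :
    (1 - rowProj A) * (1 - rowProj A) = 1 - rowProj A := by
  have hP : rowProj A * rowProj A = rowProj A := by
    simp only [rowProj, Matrix.mul_assoc]
    rw [← Matrix.mul_assoc A Aᵀ, ← Matrix.mul_assoc (A * Aᵀ), mul_nonsing_inv _ hA,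
      Matrix.one_mul]
  rw [Matrix.mul_sub, Matrix.sub_mul, Matrix.sub_mul, hP, Matrix.one_mul, Matrix.mul_one,
    Matrix.one_mul, sub_self, sub_zero]

lemma nsq_sqrt_inv_mul_mulVec (hpd : (A * Aᵀ).PosDef) (w : Fin N → ℝ) :
    nsq ((hpd.inv.posSemidef.sqrt * A) *ᵥ w) = w ⬝ᵥ (rowProj A *ᵥ w) := by
  rw [nsq_eq_dotProduct, ← dotProduct_transpose_mulVec, mulVec_mulVec,
    transpose_mul, hpd.inv.posSemidef.transpose_sqrt, Matrix.mul_assoc,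
    ← Matrix.mul_assoc hpd.inv.posSemidef.sqrt, hpd.inv.posSemidef.sqrt_mul_self, rowProj,
    Matrix.mul_assoc]

lemma nsq_one_sub_rowProj_mulVec (hpd : (A * Aᵀ).PosDef) (w : Fin N → ℝ) :
    nsq ((1 - rowProj A) *ᵥ w) = nsq w - nsq ((hpd.inv.posSemidef.sqrt * A) *ᵥ w) := by
  rw [nsq_eq_dotProduct, mulVec_dotProduct_mulVec_of_idempotent (transpose_one_sub_rowProj A)
    (one_sub_rowProj_mul_self A hpd.det_pos.ne'.isUnit), nsq_sqrt_inv_mul_mulVec A hpd,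
    nsq_eq_dotProduct, sub_mulVec, one_mulVec, dotProduct_sub]

lemma nst_step_sub_eq (x μ : Fin N → ℝ) (e : Fin M → ℝ) :
    μ + (Aᵀ * (A * Aᵀ)⁻¹) *ᵥ (A *ᵥ x + e - A *ᵥ μ) - x =
      (1 - rowProj A) *ᵥ (μ - x) + (Aᵀ * (A * Aᵀ)⁻¹) *ᵥ e := by
  simp only [rowProj, mulVec_add, mulVec_sub, sub_mulVec, one_mulVec, ← mulVec_mulVec]
  abel

end RowSpace

section Feedback

variable {M N : ℕ}

def zeroExtend {T : Finset (Fin N)} (c : T → ℝ) : Fin N → ℝ :=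
  fun i => if h : i ∈ T then c ⟨i, h⟩ else 0

lemma suppF_zeroExtend_subset {T : Finset (Fin N)} (c : T → ℝ) : suppF (zeroExtend c) ⊆ T :=
  suppF_subset_iff.2 fun _ hi => dif_neg hi

lemma zeroExtend_injective (T : Finset (Fin N)) :
    Function.Injective (zeroExtend (T := T)) := fun c d h =>
  funext fun j => by simpa [zeroExtend, j.2] using congrFun h j

lemma zeroExtend_restrict (T : Finset (Fin N)) (x : Fin N → ℝ) :
    zeroExtend (fun j : T => x j) = restr T x := by
  funext i; by_cases h : i ∈ T <;> simp [zeroExtend, restr, h]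

lemma mulVec_zeroExtend (A : Matrix (Fin M) (Fin N) ℝ) {T : Finset (Fin N)} (c : T → ℝ) :
    A *ᵥ zeroExtend c = colSub A T *ᵥ c := by
  have hc : ∀ j : T, c j = zeroExtend c j := fun j => by simp [zeroExtend, j.2]
  funext i
  simp only [mulVec, dotProduct, colSub, hc]
  rw [Finset.sum_coe_sort T fun k => A i k * zeroExtend c k]
  exact (Finset.sum_subset (Finset.subset_univ T) fun k _ hk => by simp [zeroExtend, hk]).symm

theorem IsRIP.isUnit_det_gram {A : Matrix (Fin M) (Fin N) ℝ} {t : ℕ} {δ : ℝ} (h : IsRIP A t δ)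
    (hδ : δ < 1) {T : Finset (Fin N)} (hT : T.card ≤ t) :
    IsUnit ((colSub A T)ᵀ * colSub A T).det := by
  have hinj : Function.Injective (colSub A T).mulVec := by
    refine (injective_iff_map_eq_zero (colSub A T).mulVecLin).2 fun c (hc : _ *ᵥ c = 0) => ?_
    have hlo := (h _ (sparse_of_suppF_subset (suppF_zeroExtend_subset c) hT)).1
    rw [mulVec_zeroExtend, hc, nsq_zero] at hlo
    have hz : zeroExtend c = 0 := by
      by_contra hne
      nlinarith [nsq_pos hne]
    exact zeroExtend_injective T (hz.trans (by funext; simp [zeroExtend]))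
  simpa using (PosDef.conjTranspose_mul_self _ hinj).det_pos.ne'.isUnit

/-- The feedback residual is the part of `A x_{Tᶜ}` orthogonal to the columns of `A_T`. -/
lemma mulVec_sub_mulVec_feedback (A : Matrix (Fin M) (Fin N) ℝ) (T : Finset (Fin N))
    (xk : Fin N → ℝ) :
    A *ᵥ xk - A *ᵥ feedback A T xk =
      A *ᵥ restr Tᶜ xk - colSub A T *ᵥ ((((colSub A T)ᵀ * colSub A T)⁻¹ * (colSub A T)ᵀ) *ᵥ
        (A *ᵥ restr Tᶜ xk)) := by
  have hfb : feedback A T xk = restr T xk + zeroExtend ((((colSub A T)ᵀ * colSub A T)⁻¹ *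
      (colSub A T)ᵀ) *ᵥ (A *ᵥ restr Tᶜ xk)) := by
    funext i
    by_cases h : i ∈ T <;> simp [feedback, zeroExtend, restr, h]
  have hxk : A *ᵥ xk = A *ᵥ restr T xk + A *ᵥ restr Tᶜ xk := by
    rw [← mulVec_add, restr_add_restr_compl]
  rw [hxk, hfb, mulVec_add, mulVec_zeroExtend]
  abel

lemma feedback_residual_dotProduct_eq_zero (A : Matrix (Fin M) (Fin N) ℝ) {T : Finset (Fin N)}
    (hG : IsUnit ((colSub A T)ᵀ * colSub A T).det) (xk z : Fin N → ℝ) :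
    (A *ᵥ xk - A *ᵥ feedback A T xk) ⬝ᵥ (A *ᵥ restr T z) = 0 := by
  set B := colSub A T
  set w := A *ᵥ restr Tᶜ xk
  have hnormal : Bᵀ *ᵥ (B *ᵥ ((Bᵀ * B)⁻¹ * Bᵀ) *ᵥ w) = Bᵀ *ᵥ w := by
    rw [mulVec_mulVec, mulVec_mulVec, ← Matrix.mul_assoc, mul_nonsing_inv _ hG, Matrix.one_mul]
  rw [← zeroExtend_restrict, mulVec_zeroExtend, ← dotProduct_transpose_mulVec,
    mulVec_sub_mulVec_feedback, mulVec_sub, hnormal, sub_self, dotProduct_zero]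

lemma le_div_sqrt_add_div_of_sq_eq_add_sq {δ V σ ω ε : ℝ} (hδ₀ : 0 ≤ δ) (hδ₁ : δ < 1)
    (hσ : 0 ≤ σ) (hω : 0 ≤ ω) (hε : 0 ≤ ε) (hV : V ^ 2 = σ ^ 2 + ω ^ 2)
    (hσV : σ ≤ δ * V + ε) :
    V ≤ ω / √(1 - δ ^ 2) + ε / (1 - δ) := by
  have hlam2 : √(1 - δ ^ 2) ^ 2 = 1 - δ ^ 2 := Real.sq_sqrt (by nlinarith)
  have hlam : 0 < √(1 - δ ^ 2) := Real.sqrt_pos.2 (by nlinarith)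
  set c := ε / (1 - δ)
  have hc : ε = (1 - δ) * c := (mul_div_cancel₀ ε (by linarith : 1 - δ ≠ 0)).symm
  have hc₀ : 0 ≤ c := div_nonneg hε (by linarith)
  -- `δ V + ε = δ (V - c) + c`, so `(1 - δ²) (V - c)² ≤ ω²` once `V ≥ c`
  rw [← sub_le_iff_le_add, le_div_iff₀ hlam]
  rcases le_or_gt (V - c) 0 with hW | hW
  · nlinarith
  refine le_of_pow_le_pow_left₀ two_ne_zero hω ?_
  have hσ2 : σ ^ 2 ≤ (δ * V + ε) ^ 2 := pow_le_pow_left₀ hσ hσV 2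
  rw [mul_pow, hlam2]
  nlinarith [mul_nonneg (mul_nonneg (by linarith : (0:ℝ) ≤ 1 - δ) hc₀) hW.le]

theorem nrm_sub_feedback_le {A : Matrix (Fin M) (Fin N) ℝ} {s t : ℕ} {δs δ : ℝ}
    (hs : IsRIP A s δs) (ht : IsRIP A t δ) (hδ : δ < 1) {x xk : Fin N → ℝ} {e : Fin M → ℝ}
    (hxk : A *ᵥ xk = A *ᵥ x + e) {T : Finset (Fin N)} (hTs : T.card ≤ s)
    (hTt : (suppF x ∪ T).card ≤ t) :
    nrm (x - feedback A T xk) ≤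
      nrm (restr Tᶜ x) / √(1 - δ ^ 2) + √(1 + δs) * nrm e / (1 - δ) := by
  set v := x - feedback A T xk
  have hvC : restr Tᶜ v = restr Tᶜ x := by
    funext i; by_cases h : i ∈ T <;> simp [v, restr, feedback, h]
  have hv : suppF v ⊆ suppF x ∪ T := by
    rw [suppF_subset_iff]
    intro i hi
    simp only [Finset.mem_union, not_or] at hi
    simp [v, feedback, hi.2, suppF_subset_iff.1 subset_rfl i hi.1]
  have hε : 0 ≤ √(1 + δs) * nrm e := mul_nonneg (Real.sqrt_nonneg _) (nrm_nonneg e)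
  rcases eq_or_ne v 0 with hv0 | hv0
  · rw [hv0, nrm_zero]
    exact add_nonneg (div_nonneg (nrm_nonneg _) (Real.sqrt_nonneg _))
      (div_nonneg hε (by linarith))
  have hδ₀ : 0 ≤ δ := ht.nonneg_of_ne_zero (sparse_of_suppF_subset hv hTt) hv0
  have horth : (A *ᵥ v + e) ⬝ᵥ (A *ᵥ restr T v) = 0 := by
    have hres : A *ᵥ v + e = A *ᵥ xk - A *ᵥ feedback A T xk := by
      rw [hxk, mulVec_sub]; abel
    rw [hres]
    exact feedback_residual_dotProduct_eq_zero A (ht.isUnit_det_gram hδ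
      ((Finset.card_le_card Finset.subset_union_right).trans hTt)) xk v
  rw [add_dotProduct] at horth
  have hvT : nrm (restr T v) ≤ δ * nrm v + √(1 + δs) * nrm e := by
    refine nrm_le_of_nsq_le_mul (add_nonneg (mul_nonneg hδ₀ (nrm_nonneg v)) hε) ?_
    calc nsq (restr T v) = v ⬝ᵥ restr T v := by rw [dotProduct_comm, restr_dotProduct_self]
      _ ≤ (A *ᵥ v) ⬝ᵥ (A *ᵥ restr T v) + δ * nrm v * nrm (restr T v) :=
          ht.dotProduct_le hTt hv ((suppF_restr_subset T v).trans Finset.subset_union_right)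
      _ = (-e) ⬝ᵥ (A *ᵥ restr T v) + δ * nrm v * nrm (restr T v) := by
          rw [neg_dotProduct]; linarith
      _ ≤ nrm e * (√(1 + δs) * nrm (restr T v)) + δ * nrm v * nrm (restr T v) := by
          grw [dotProduct_le_nrm_mul_nrm, nrm_neg,
            hs.nrm_mulVec_le (sparse_of_suppF_subset (suppF_restr_subset T v) hTs)]
          exact nrm_nonneg e
      _ = nrm (restr T v) * (δ * nrm v + √(1 + δs) * nrm e) := by ring
  have hpyth : nrm v ^ 2 = nrm (restr T v) ^ 2 + nrm (restr Tᶜ v) ^ 2 := by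
    simp only [nrm_sq]
    exact (nsq_restr_add_nsq_restr_compl T v).symm
  rw [← hvC]
  exact le_div_sqrt_add_div_of_sq_eq_add_sq hδ₀ hδ (nrm_nonneg _) (nrm_nonneg _) hε hpyth hvT

end Feedback

theorem nrm_restr_compl_le_of_nst_top {M N : ℕ} {A : Matrix (Fin M) (Fin N) ℝ}
    (hpd : (A * Aᵀ).PosDef) {s : ℕ} {γ θ : ℝ}
    (hγ : ∀ z : Fin N → ℝ, Sparse (3 * s) z →
      (1 - γ) * nsq z ≤ nsq ((hpd.inv.posSemidef.sqrt * A) *ᵥ z))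
    (hθ : IsRIP ((A * Aᵀ)⁻¹ * A) (2 * s) θ) {x μ : Fin N → ℝ} {e : Fin M → ℝ}
    (hx : Sparse s x) (hμ : Sparse s μ) {T : Finset (Fin N)} (hT : T.card = s)
    (htop : ∀ i ∈ T, ∀ j ∉ T,
      |(μ + (Aᵀ * (A * Aᵀ)⁻¹) *ᵥ (A *ᵥ x + e - A *ᵥ μ)) j| ≤
      |(μ + (Aᵀ * (A * Aᵀ)⁻¹) *ᵥ (A *ᵥ x + e - A *ᵥ μ)) i|) :
    nrm (restr Tᶜ x) ≤ √2 * (γ * nrm (x - μ) + √(1 + θ) * nrm e) := by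
  have hR := hx.card_suppF_union_le hT.le
  have hproj : ∀ w, Sparse (3 * s) w → nsq ((1 - rowProj A) *ᵥ w) ≤ γ * nsq w := fun w hw => by
    rw [nsq_one_sub_rowProj_mulVec A hpd]
    linarith [hγ w hw]
  calc nrm (restr Tᶜ x)
      ≤ √2 * nrm (restr (suppF x ∪ T) (μ + (Aᵀ * (A * Aᵀ)⁻¹) *ᵥ (A *ᵥ x + e - A *ᵥ μ) - x)) :=
        nrm_restr_compl_le_of_top (hT ▸ hx) htop
    _ ≤ √2 * (nrm (restr (suppF x ∪ T) ((1 - rowProj A) *ᵥ (μ - x))) +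
          nrm (restr (suppF x ∪ T) (((A * Aᵀ)⁻¹ * A)ᵀ *ᵥ e))) := by
        rw [nst_step_sub_eq, restr_add, transpose_inv_mul_self_mul]
        gcongr
        exact nrm_add_le _ _
    _ ≤ √2 * (γ * nrm (x - μ) + √(1 + θ) * nrm e) := by
        rw [nrm_sub_comm x]
        gcongr
        · exact nrm_restr_mulVec_le_of_idempotent (transpose_one_sub_rowProj A)
            (one_sub_rowProj_mul_self A hpd.det_pos.ne'.isUnit) hproj (by omega)
            ((hμ.sub hx).mono (by omega))
        · exact hθ.nrm_restr_transpose_mulVec_le hR e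

/-- one-step error contraction of NST+HT+FB with feedback. -/
theorem stmt7 {M N : ℕ} (A : Matrix (Fin M) (Fin N) ℝ) (hpd : (A * Aᵀ).PosDef)
    (s : ℕ) (x μprev xk : Fin N → ℝ) (e : Fin M → ℝ) (y : Fin M → ℝ)
    (hy : y = A.mulVec x + e) (hx : Sparse s x) (hμ : Sparse s μprev)
    (hxk : A.mulVec xk = y)
    (T : Finset (Fin N)) (hT : T.card = s)
    (hTtop : ∀ i ∈ T, ∀ j ∉ T,
      |(μprev + (Aᵀ * (A * Aᵀ)⁻¹).mulVec (y - A.mulVec μprev)) j| ≤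
      |(μprev + (Aᵀ * (A * Aᵀ)⁻¹).mulVec (y - A.mulVec μprev)) i|)
    (δs δ2s γ3s θ2s : ℝ)
    (h1 : IsRIP A s δs) (h2 : IsRIP A (2 * s) δ2s) (hδ : δ2s < 1)
    (h3 : ∀ z : Fin N → ℝ, Sparse (3 * s) z →
      (1 - γ3s) * nsq z ≤ nsq ((hpd.inv.posSemidef.sqrt * A).mulVec z))
    (h4 : IsRIP ((A * Aᵀ)⁻¹ * A) (2 * s) θ2s) :
    nrm (x - feedback A T xk) ≤
      Real.sqrt (2 * γ3s ^ 2 / (1 - δ2s ^ 2)) * nrm (x - μprev) +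
      (Real.sqrt (1 + δs) / (1 - δ2s) +
        Real.sqrt (2 * (1 + θ2s)) / Real.sqrt (1 - δ2s ^ 2)) * nrm e := by
  subst hy
  calc nrm (x - feedback A T xk)
      ≤ nrm (restr Tᶜ x) / √(1 - δ2s ^ 2) + √(1 + δs) * nrm e / (1 - δ2s) :=
        nrm_sub_feedback_le h1 h2 hδ hxk hT.le (hx.card_suppF_union_le hT.le)
    _ ≤ √2 * (γ3s * nrm (x - μprev) + √(1 + θ2s) * nrm e) / √(1 - δ2s ^ 2) +
          √(1 + δs) * nrm e / (1 - δ2s) := by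
        gcongr
        exact nrm_restr_compl_le_of_nst_top hpd h3 h4 hx hμ hT hTtop
    _ = √2 / √(1 - δ2s ^ 2) * (γ3s * nrm (x - μprev)) +
          (√(1 + δs) / (1 - δ2s) + √2 * √(1 + θ2s) / √(1 - δ2s ^ 2)) * nrm e := by ring
    _ ≤ √2 / √(1 - δ2s ^ 2) * (|γ3s| * nrm (x - μprev)) +
          (√(1 + δs) / (1 - δ2s) + √2 * √(1 + θ2s) / √(1 - δ2s ^ 2)) * nrm e := by
        gcongr
        exacts [nrm_nonneg _, le_abs_self γ3s]
    _ = _ := by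
        rw [Real.sqrt_div (by positivity), Real.sqrt_mul zero_le_two, Real.sqrt_sq_eq_abs,
          Real.sqrt_mul zero_le_two]
        ring
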